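/- Let Q be a finite acyclic quiver and R a right Noetherian ring. Let M_R(Q) be the subcategory of rep(Q,R) of representations isomorphic to finite direct sums of representations of the form e^v_λ(M) with v a vertex and M ∈ mod-R. Then M_R(Q) is contravariantly finite in rep(Q,R): for every representation X, the canonical map f_X: ⊕_{v ∈ Q₀} e^v_λ(X_v) → X is a right M_R(Q)-approximation. -/

import Mathlib

/-! **Statement 10.** Let `Q` be a finite acyclic quiver and `R` a right
Noetherian ring.  Let `M_R(Q)` be the subcategory of `rep(Q,R)` of
representations isomorphic to finite direct sums of representations of the form
`e^v_λ(M)` with `v` a vertex and `M ∈ mod-R`.  Then `M_R(Q)` is contravariantly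
finite in `rep(Q,R)`: for every representation `X`, the canonical map
`f_X : ⊕_{v ∈ Q₀} e^v_λ(X_v) → X` is a right `M_R(Q)`-approximation.

Right `R`-modules are `Rᵐᵒᵖ`-modules; representations and their morphisms are
given concretely, and `e^v_λ(M)` has at `w` the module `(Path v w) →₀ M`. -/

open scoped DirectSum Classical

noncomputable section

variable (A V : Type) [Ring A] [Quiver.{0} V]

/-- A representation of the quiver `V` by `A`-modules. -/
structure QRep where
  M : V → Type
  [acg : ∀ v, AddCommGroup (M v)]
  [mod : ∀ v, Module A (M v)]
  act : ∀ {a b : V}, (a ⟶ b) → (M a →ₗ[A] M b)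

attribute [instance] QRep.acg QRep.mod

variable {A V}

/-- A morphism of representations. -/
structure QHom (D E : QRep A V) where
  app : ∀ v, D.M v →ₗ[A] E.M v
  natural : ∀ {a b : V} (e : a ⟶ b),
    (E.act e).comp (app a) = (app b).comp (D.act e)

/-- The action of a path on a representation. -/
def QRep.pact (D : QRep A V) : ∀ {a b : V}, Quiver.Path a b → (D.M a →ₗ[A] D.M b)
  | _, _, Quiver.Path.nil => LinearMap.id
  | _, _, Quiver.Path.cons p e => (D.act e).comp (D.pact p)

/-- The finite direct sum `⊕_i e^{v i}_λ(N i)` of representations of the form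
`e^v_λ(M)`. -/
def sumRep (ι : Type) (v : ι → V) (N : ι → ModuleCat.{0} A) : QRep A V where
  M := fun w => ⨁ (i : ι), (Quiver.Path (v i) w →₀ N i)
  act := fun e => DirectSum.toModule A ι _ fun i =>
    (DirectSum.lof A ι (fun i' => Quiver.Path (v i') _ →₀ N i') i).comp
      (Finsupp.lmapDomain (N i) A (fun p => p.comp e.toPath))

/-- `D` belongs to `M_R(Q)`: it is isomorphic to a finite direct sum of
representations `e^v_λ(M)` with `M` finitely generated. -/
def MemMRQ (D : QRep A V) : Prop :=
  ∃ (ι : Type) (_ : Fintype ι) (v : ι → V) (N : ι → ModuleCat.{0} A)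
    (_ : ∀ i, Module.Finite A (N i))
    (F : QHom D (sumRep ι v N)) (G : QHom (sumRep ι v N) D),
    (∀ w x, G.app w (F.app w x) = x) ∧ (∀ w y, F.app w (G.app w y) = y)

/-- The canonical map `f_X : ⊕_{v ∈ Q₀} e^v_λ(X_v) → X`, whose `v`-th component
corresponds to the identity of `X_v` under the adjunction. -/
def canonicalApprox (X : QRep A V) (w : V) :
    (sumRep V id (fun u => ModuleCat.of A (X.M u))).M w →ₗ[A] X.M w :=
  DirectSum.toModule A V (X.M w) fun u =>
    Finsupp.lsum ℕ fun p : Quiver.Path (id u) w => X.pact p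

/-! `e^v_λ(N)` is free on `N` placed at `v`: a morphism out of `⊕ᵢ e^{vᵢ}_λ(Nᵢ)` is the same
as a family of linear maps `Nᵢ → X_{vᵢ}`, sending `n` at the path `p` to `X_p (φᵢ n)`, and
`f_X` is the morphism attached to the identities of the `X_v`. A morphism
`k : ⊕ᵢ e^{vᵢ}_λ(Nᵢ) → X` therefore lifts along `f_X`: send the generator `n ∈ Nᵢ` to
`k(n) ∈ X_{vᵢ}`, placed at the trivial path of the `vᵢ`-summand of `⊕_v e^v_λ(X_v)`.
For `D` in `M_R(Q)`, a retract `D → ⊕ᵢ e^{vᵢ}_λ(Nᵢ) → D`, lift `h ∘ G` and precompose with `F`. -/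

namespace QRep

variable (X : QRep A V)

@[simp] lemma pact_nil (a : V) : X.pact (Quiver.Path.nil : Quiver.Path a a) = LinearMap.id := by
  rw [QRep.pact]

@[simp] lemma pact_cons {a b c : V} (p : Quiver.Path a b) (e : b ⟶ c) :
    X.pact (p.cons e) = (X.act e).comp (X.pact p) := by
  rw [QRep.pact]

lemma pact_comp {a b c : V} (p : Quiver.Path a b) (q : Quiver.Path b c) :
    X.pact (p.comp q) = (X.pact q).comp (X.pact p) := by
  induction q with
  | nil => rw [Quiver.Path.comp_nil, pact_nil, LinearMap.id_comp]
  | cons q e ih => rw [Quiver.Path.comp_cons, pact_cons, pact_cons, ih, LinearMap.comp_assoc]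

@[simp] lemma pact_toPath {a b : V} (e : a ⟶ b) : X.pact e.toPath = X.act e := by
  rw [Quiver.Hom.toPath, pact_cons, pact_nil, LinearMap.comp_id]

end QRep

namespace QHom

@[simps]
def comp {D E F : QRep A V} (g : QHom E F) (f : QHom D E) : QHom D F where
  app w := (g.app w).comp (f.app w)
  natural e := by
    rw [← LinearMap.comp_assoc, g.natural e, LinearMap.comp_assoc, f.natural e,
      LinearMap.comp_assoc]

lemma app_pact {D E : QRep A V} (f : QHom D E) {a b : V} (p : Quiver.Path a b) (x : D.M a) :
    f.app b (D.pact p x) = E.pact p (f.app a x) := by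
  induction p with
  | nil => simp
  | cons q e ih =>
    simp only [QRep.pact_cons, LinearMap.comp_apply, ← ih]
    exact (LinearMap.congr_fun (f.natural e) _).symm

end QHom

namespace sumRep

variable {ι : Type} {v : ι → V} {N : ι → ModuleCat.{0} A}

def single {w : V} (i : ι) (p : Quiver.Path (v i) w) (n : N i) : (sumRep ι v N).M w :=
  DirectSum.lof A ι (fun i' => Quiver.Path (v i') w →₀ N i') i (Finsupp.single p n)

lemma act_single {a b : V} (e : a ⟶ b) (i : ι) (p : Quiver.Path (v i) a) (n : N i) :
    (sumRep ι v N).act e (single i p n) = single i (p.comp e.toPath) n := by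
  erw [DirectSum.toModule_lof, LinearMap.comp_apply, Finsupp.lmapDomain_apply,
    Finsupp.mapDomain_single]
  rfl

lemma pact_single {a b : V} (q : Quiver.Path a b) (i : ι) (p : Quiver.Path (v i) a) (n : N i) :
    (sumRep ι v N).pact q (single i p n) = single i (p.comp q) n := by
  induction q with
  | nil => rw [QRep.pact_nil, LinearMap.id_apply, Quiver.Path.comp_nil]
  | cons q e ih =>
    rw [QRep.pact_cons, LinearMap.comp_apply, ih, act_single, Quiver.Path.comp_assoc,
      Quiver.Hom.toPath, Quiver.Path.comp_cons, Quiver.Path.comp_nil]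

variable (ι v N) in
def incl (i : ι) : N i →ₗ[A] (sumRep ι v N).M (v i) :=
  (DirectSum.lof A ι (fun i' => Quiver.Path (v i') (v i) →₀ N i') i).comp
    (Finsupp.lsingle Quiver.Path.nil)

lemma incl_apply (i : ι) (n : N i) : incl ι v N i n = single i Quiver.Path.nil n :=
  rfl

lemma single_eq_pact_incl {w : V} (i : ι) (p : Quiver.Path (v i) w) (n : N i) :
    single i p n = (sumRep ι v N).pact p (incl ι v N i n) := by
  rw [incl_apply, pact_single, Quiver.Path.nil_comp]

lemma linearMap_ext {w : V} {M : Type} [AddCommMonoid M] [Module A M]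
    {f g : (sumRep ι v N).M w →ₗ[A] M}
    (h : ∀ i (p : Quiver.Path (v i) w) (n : N i), f (single i p n) = g (single i p n)) :
    f = g :=
  DirectSum.linearMap_ext A fun i => Finsupp.lhom_ext (h i)

lemma hom_ext {X : QRep A V} {f g : QHom (sumRep ι v N) X}
    (h : ∀ i n, f.app (v i) (incl ι v N i n) = g.app (v i) (incl ι v N i n)) (w : V) :
    f.app w = g.app w :=
  linearMap_ext fun i p n => by
    rw [single_eq_pact_incl, QHom.app_pact, QHom.app_pact, h]

variable (X : QRep A V) (φ : ∀ i, N i →ₗ[A] X.M (v i))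

def descApp (w : V) : (sumRep ι v N).M w →ₗ[A] X.M w :=
  DirectSum.toModule A ι (X.M w) fun i =>
    Finsupp.lsum ℕ fun p : Quiver.Path (v i) w => (X.pact p).comp (φ i)

lemma descApp_single {w : V} (i : ι) (p : Quiver.Path (v i) w) (n : N i) :
    descApp X φ w (single i p n) = X.pact p (φ i n) := by
  erw [descApp, DirectSum.toModule_lof, Finsupp.lsum_single]
  rfl

def desc : QHom (sumRep ι v N) X where
  app := descApp X φ
  natural e := linearMap_ext fun i p n => by
    rw [LinearMap.comp_apply, LinearMap.comp_apply, act_single, descApp_single,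
      descApp_single, QRep.pact_comp, QRep.pact_toPath, LinearMap.comp_apply]

lemma desc_app_incl (i : ι) (n : N i) : (desc X φ).app (v i) (incl ι v N i n) = φ i n := by
  rw [desc, incl_apply, descApp_single, QRep.pact_nil, LinearMap.id_apply]

end sumRep

def canonicalHom (X : QRep A V) : QHom (sumRep V id fun u => ModuleCat.of A (X.M u)) X :=
  sumRep.desc X fun _ => LinearMap.id

lemma canonicalHom_app (X : QRep A V) (w : V) : (canonicalHom X).app w = canonicalApprox X w :=
  rfl

lemma canonicalHom_app_incl (X : QRep A V) (u : V) (x : X.M u) :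
    (canonicalHom X).app u (sumRep.incl V id (fun u => ModuleCat.of A (X.M u)) u x) = x :=
  sumRep.desc_app_incl (v := id) (N := fun u => ModuleCat.of A (X.M u)) X _ u x

section canonicalLift

variable {ι : Type} {v : ι → V} {N : ι → ModuleCat.{0} A} {X : QRep A V}

def canonicalLift (k : QHom (sumRep ι v N) X) :
    QHom (sumRep ι v N) (sumRep V id fun u => ModuleCat.of A (X.M u)) :=
  sumRep.desc _ fun i =>
    (sumRep.incl V id (fun u => ModuleCat.of A (X.M u)) (v i)).comp
      ((k.app (v i)).comp (sumRep.incl ι v N i))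

lemma canonicalApprox_canonicalLift_app (k : QHom (sumRep ι v N) X) (w : V)
    (y : (sumRep ι v N).M w) :
    canonicalApprox X w ((canonicalLift k).app w y) = k.app w y := by
  rw [← canonicalHom_app, ← LinearMap.comp_apply, ← QHom.comp_app]
  refine LinearMap.congr_fun (sumRep.hom_ext (fun i n => ?_) w) y
  rw [QHom.comp_app, LinearMap.comp_apply, canonicalLift, sumRep.desc_app_incl,
    LinearMap.comp_apply, LinearMap.comp_apply, canonicalHom_app_incl]

end canonicalLift

theorem canonical_right_approximation (R : Type) [Ring R] (hR : IsNoetherianRing Rᵐᵒᵖ)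
    [Fintype V] [∀ a b : V, Fintype (a ⟶ b)]
    (hacyclic : ∀ (v : V) (p : Quiver.Path v v), p = Quiver.Path.nil)
    (X : QRep Rᵐᵒᵖ V) (hXfg : ∀ u, Module.Finite Rᵐᵒᵖ (X.M u)) :
    -- `f_X` is a morphism of representations ...
    (∀ {a b : V} (e : a ⟶ b),
      (X.act e).comp (canonicalApprox X a) =
        (canonicalApprox X b).comp
          ((sumRep V id (fun u => ModuleCat.of Rᵐᵒᵖ (X.M u))).act e)) ∧
    -- ... and every morphism from an object of `M_R(Q)` factors through it.
    (∀ D : QRep Rᵐᵒᵖ V, MemMRQ D → ∀ h : QHom D X,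
      ∃ u : QHom D (sumRep V id (fun u => ModuleCat.of Rᵐᵒᵖ (X.M u))),
        ∀ w x, canonicalApprox X w (u.app w x) = h.app w x) := by
  refine ⟨fun e => ?_, ?_⟩
  · rw [← canonicalHom_app, ← canonicalHom_app]
    exact (canonicalHom X).natural e
  · rintro D ⟨ι, -, v, N, -, F, G, hGF, -⟩ h
    refine ⟨(canonicalLift (h.comp G)).comp F, fun w x => ?_⟩
    rw [QHom.comp_app, LinearMap.comp_apply, canonicalApprox_canonicalLift_app, QHom.comp_app,
      LinearMap.comp_apply, hGF]

end
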